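/- arXiv:2605.20899 — 2 statements merged into one kernel-verified Lean document; each statement's English description precedes it below -/
import Mathlib

section
/- Let E(x) = (1/2)∫_{|x|}^∞ e^{−t}/t dt. For all y > 0, (e^{−y}/4)·log(1 + 2/y) ≤ E(y) ≤ (e^{−y}/2)·log(1 + 1/y). -/
open MeasureTheory

/-- The normalized exponential integral `E(x) = (1/2)∫_{|x|}^∞ e^{-t}/t dt`. -/
noncomputable def Enorm (x : ℝ) : ℝ := (1 / 2) * ∫ t in Set.Ioi |x|, Real.exp (-t) / t

/-!
Substituting `t = x (1 + s)` gives `∫_x^∞ e^{-t}/t dt = e^{-x} ∫_0^∞ e^{-xs}/(1+s) ds`,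
and Frullani's integral gives `log (1 + c/x) = ∫_0^∞ e^{-xs} (1 - e^{-cs})/s ds`. Both bounds
then follow from comparing integrands: `(1 - e^{-2s})/(2s) ≤ 1/(1+s) ≤ (1 - e^{-s})/s` for `s > 0`.
-/

open Set Real Function

lemma one_sub_le_one_add_mul_exp_neg_two_mul {s : ℝ} (hs : 0 ≤ s) :
    1 - s ≤ (1 + s) * exp (-2 * s) := by
  rcases lt_or_ge s 1 with hs1 | hs1
  · have hsum := hasSum_log_sub_log_of_abs_lt_one (abs_lt.2 ⟨by linarith, hs1⟩)
    have hlog : 2 * s ≤ log (1 + s) - log (1 - s) := by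
      simpa using le_hasSum hsum 0 fun k _ => by positivity
    have hexp : (1 - s) * exp (2 * s) ≤ 1 + s := by
      calc (1 - s) * exp (2 * s) = exp (log (1 - s) + 2 * s) := by
            rw [exp_add, exp_log (by linarith)]
        _ ≤ exp (log (1 + s)) := exp_le_exp.2 (by linarith)
        _ = 1 + s := exp_log (by linarith)
    calc 1 - s = (1 - s) * exp (2 * s) * exp (-2 * s) := by
          rw [mul_assoc, ← exp_add]; simp
      _ ≤ (1 + s) * exp (-2 * s) := by gcongr
  · nlinarith [exp_pos (-2 * s)]

lemma inv_one_add_le_one_sub_exp_neg_div {s : ℝ} (hs : 0 < s) :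
    (1 + s)⁻¹ ≤ (1 - exp (-s)) / s := by
  have h := add_one_le_exp s
  have hmul : exp (-s) * exp s = 1 := by rw [← exp_add]; simp
  rw [le_div_iff₀ hs, inv_mul_le_iff₀ (by positivity)]
  nlinarith [exp_pos (-s)]

lemma one_sub_exp_neg_two_mul_div_le_inv_one_add {s : ℝ} (hs : 0 < s) :
    (1 - exp (-2 * s)) / (2 * s) ≤ (1 + s)⁻¹ := by
  have h := one_sub_le_one_add_mul_exp_neg_two_mul hs.le
  rw [div_le_iff₀ (by positivity), le_inv_mul_iff₀ (by positivity)]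
  nlinarith

lemma integral_exp_neg_mul_Ioi_zero {b : ℝ} (hb : 0 < b) :
    ∫ s in Ioi (0 : ℝ), exp (-b * s) = b⁻¹ := by
  simpa [neg_div, div_neg] using integral_exp_mul_Ioi (neg_neg_iff_pos.2 hb) 0

lemma integrable_exp_neg_mul_Ioc_prod_Ioi {a : ℝ} (ha : 0 < a) (b : ℝ) :
    Integrable (uncurry fun u s : ℝ => exp (-u * s))
      ((volume.restrict (Ioc a b)).prod (volume.restrict (Ioi 0))) := by
  have hpos : ∀ᵐ u ∂volume.restrict (Ioc a b), 0 < u :=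
    (ae_restrict_mem measurableSet_Ioc).mono fun u hu => ha.trans hu.1
  refine (integrable_prod_iff (by fun_prop)).2 ⟨?_, ?_⟩
  · filter_upwards [hpos] with u hu using exp_neg_integrableOn_Ioi 0 hu
  · have hinv : IntegrableOn (fun u : ℝ => u⁻¹) (Ioc a b) :=
      (continuousOn_inv₀.mono fun u hu => (ha.trans_le hu.1).ne').integrableOn_Icc.mono_set
        Ioc_subset_Icc_self
    refine hinv.congr_fun_ae ?_
    filter_upwards [hpos] with u hu
    simp only [uncurry_apply_pair, norm_of_nonneg (exp_pos _).le]
    exact (integral_exp_neg_mul_Ioi_zero hu).symm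

lemma integral_Ioc_exp_neg_mul {a b s : ℝ} (hab : a ≤ b) (hs : s ≠ 0) :
    ∫ u in Ioc a b, exp (-u * s) = (exp (-a * s) - exp (-b * s)) / s := by
  rw [← intervalIntegral.integral_of_le hab]
  simp_rw [neg_mul, ← mul_neg, mul_comm _ (-s)]
  rw [intervalIntegral.integral_comp_mul_left _ (neg_ne_zero.2 hs), integral_exp, smul_eq_mul]
  field_simp
  ring

lemma integrableOn_exp_neg_mul_sub_div {a b : ℝ} (ha : 0 < a) (hab : a ≤ b) :
    IntegrableOn (fun s => (exp (-a * s) - exp (-b * s)) / s) (Ioi 0) :=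
  IntegrableOn.congr_fun (integrable_exp_neg_mul_Ioc_prod_Ioi ha b).integral_prod_right
    (fun _ hs => integral_Ioc_exp_neg_mul hab (ne_of_gt hs)) measurableSet_Ioi

theorem integral_exp_neg_mul_sub_div {a b : ℝ} (ha : 0 < a) (hab : a ≤ b) :
    ∫ s in Ioi (0 : ℝ), (exp (-a * s) - exp (-b * s)) / s = log (b / a) := calc
  _ = ∫ s in Ioi (0 : ℝ), ∫ u in Ioc a b, exp (-u * s) :=
    setIntegral_congr_fun measurableSet_Ioi fun _ hs =>
      (integral_Ioc_exp_neg_mul hab (ne_of_gt hs)).symm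
  _ = ∫ u in Ioc a b, ∫ s in Ioi (0 : ℝ), exp (-u * s) :=
    (integral_integral_swap (integrable_exp_neg_mul_Ioc_prod_Ioi ha b)).symm
  _ = ∫ u in a..b, u⁻¹ := by
    rw [intervalIntegral.integral_of_le hab]
    exact setIntegral_congr_fun measurableSet_Ioc fun u hu =>
      integral_exp_neg_mul_Ioi_zero (ha.trans hu.1)
  _ = log (b / a) := integral_inv_of_pos ha (ha.trans_le hab)

lemma integral_Ioi_comp_add_right {E : Type*} [NormedAddCommGroup E] [NormedSpace ℝ E]
    (f : ℝ → E) (a c : ℝ) : ∫ s in Ioi a, f (s + c) = ∫ t in Ioi (a + c), f t := by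
  rw [← (measurePreserving_add_right volume c).setIntegral_preimage_emb
    (MeasurableEquiv.addRight c).measurableEmbedding f (Ioi (a + c)), preimage_add_const_Ioi,
    add_sub_cancel_right]

lemma integral_Ioi_exp_neg_div_eq {x : ℝ} (hx : 0 < x) :
    ∫ t in Ioi x, exp (-t) / t = exp (-x) * ∫ s in Ioi (0 : ℝ), exp (-x * s) / (1 + s) := calc
  _ = x * ∫ s in Ioi (1 : ℝ), exp (-(x * s)) / (x * s) := by
    simpa using (integral_comp_mul_left_Ioi' (fun t => exp (-t) / t) 1 hx).symm
  _ = x * ∫ s in Ioi (0 : ℝ), exp (-(x * (s + 1))) / (x * (s + 1)) := by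
    rw [integral_Ioi_comp_add_right (fun s => exp (-(x * s)) / (x * s)), zero_add]
  _ = _ := by
    rw [← integral_const_mul, ← integral_const_mul]
    congr 1 with s
    rw [show -(x * (s + 1)) = -x + -x * s by ring, exp_add]
    field_simp
    ring_nf

lemma integrableOn_exp_neg_mul_div_one_add {a : ℝ} (ha : 0 < a) :
    IntegrableOn (fun s => exp (-a * s) / (1 + s)) (Ioi 0) := by
  refine (exp_neg_integrableOn_Ioi 0 ha).mono'
    (by fun_prop : Measurable fun s : ℝ => exp (-a * s) / (1 + s)).aestronglyMeasurable ?_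
  filter_upwards [ae_restrict_mem measurableSet_Ioi] with s (hs : 0 < s)
  rw [norm_of_nonneg (div_nonneg (exp_pos _).le (by linarith))]
  exact div_le_self (exp_pos _).le (by linarith)

lemma integral_exp_neg_mul_div_one_add_le {a : ℝ} (ha : 0 < a) :
    ∫ s in Ioi (0 : ℝ), exp (-a * s) / (1 + s) ≤ log (1 + 1 / a) := by
  rw [show 1 + 1 / a = (a + 1) / a by field_simp, ← integral_exp_neg_mul_sub_div ha (by linarith)]
  refine setIntegral_mono_on (integrableOn_exp_neg_mul_div_one_add ha)
    (integrableOn_exp_neg_mul_sub_div ha (by linarith)) measurableSet_Ioi fun s (hs : 0 < s) => ?_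
  calc exp (-a * s) / (1 + s) = exp (-a * s) * (1 + s)⁻¹ := div_eq_mul_inv _ _
    _ ≤ exp (-a * s) * ((1 - exp (-s)) / s) := by
      gcongr
      exact inv_one_add_le_one_sub_exp_neg_div hs
    _ = (exp (-a * s) - exp (-(a + 1) * s)) / s := by
      rw [show -(a + 1) * s = -a * s + -s by ring, exp_add]
      ring

lemma log_div_two_le_integral_exp_neg_mul_div_one_add {a : ℝ} (ha : 0 < a) :
    log (1 + 2 / a) / 2 ≤ ∫ s in Ioi (0 : ℝ), exp (-a * s) / (1 + s) := by
  rw [show 1 + 2 / a = (a + 2) / a by field_simp, ← integral_exp_neg_mul_sub_div ha (by linarith),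
    ← integral_div]
  refine setIntegral_mono_on ((integrableOn_exp_neg_mul_sub_div ha (by linarith)).div_const 2)
    (integrableOn_exp_neg_mul_div_one_add ha) measurableSet_Ioi fun s (hs : 0 < s) => ?_
  calc (exp (-a * s) - exp (-(a + 2) * s)) / s / 2
    _ = exp (-a * s) * ((1 - exp (-2 * s)) / (2 * s)) := by
      rw [show -(a + 2) * s = -a * s + -2 * s by ring, exp_add]
      field_simp
    _ ≤ exp (-a * s) * (1 + s)⁻¹ := by
      gcongr
      exact one_sub_exp_neg_two_mul_div_le_inv_one_add hs
    _ = exp (-a * s) / (1 + s) := (div_eq_mul_inv _ _).symm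

theorem Enorm_log_bounds (y : ℝ) (hy : 0 < y) :
    Real.exp (-y) / 4 * Real.log (1 + 2 / y) ≤ Enorm y ∧
    Enorm y ≤ Real.exp (-y) / 2 * Real.log (1 + 1 / y) := by
  have hE : Enorm y = exp (-y) / 2 * ∫ s in Ioi (0 : ℝ), exp (-y * s) / (1 + s) := by
    rw [Enorm, abs_of_pos hy, integral_Ioi_exp_neg_div_eq hy]
    ring
  have hlower := log_div_two_le_integral_exp_neg_mul_div_one_add hy
  have hupper := integral_exp_neg_mul_div_one_add_le hy
  rw [hE]
  constructor <;> nlinarith [exp_pos (-y)]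
end

section
/- Entropy lower bound via singular values: let T be a compact operator between Hilbert spaces Z and X with singular values σ₁ ≥ σ₂ ≥ … > 0, let t > 0 and m = #{k : σ_k ≥ 2t}. Then log N(T(B₁), t) ≥ Σ_{k=1}^{m} log(σ_k / t), where B₁ is the closed unit ball of Z and N denotes the covering number in the norm of X. -/
/-!
The first `m` singular pairs embed the Euclidean space `ℝᵐ` isometrically on both sides, and
through these embeddings `T` acts on `ℝᵐ` as the diagonal map `diag(σ₀, …, σₘ₋₁)`. Hence
`T(B₁)` contains an isometric copy of the ellipsoid `diag(σ) (B₁ ∩ ℝᵐ)`, and projecting the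
centres of a cover of `T(B₁)` onto `ℝᵐ` gives a cover of that ellipsoid by as many balls of
radius `t`.
Comparing Lebesgue measures, `∏ σ_k · vol(B₁) ≤ N · tᵐ · vol(B₁)`.
-/

open scoped RealInnerProductSpace ENNReal
open Metric MeasureTheory

noncomputable def Orthonormal.euclideanIsometry {𝕜 X κ : Type*} [RCLike 𝕜] [Fintype κ]
    [NormedAddCommGroup X] [InnerProductSpace 𝕜 X] {v : κ → X} (hv : Orthonormal 𝕜 v) :
    EuclideanSpace 𝕜 κ →ₗᵢ[𝕜] X :=
  let b := (EuclideanSpace.basisFun κ 𝕜).toBasis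
  (b.constr 𝕜 v).isometryOfOrthonormal (v := b) (by simp [b])
    (by rwa [show ⇑(b.constr 𝕜 v) ∘ ⇑b = v from funext (b.constr_basis 𝕜 v)])

theorem Orthonormal.euclideanIsometry_apply {𝕜 X κ : Type*} [RCLike 𝕜] [Fintype κ]
    [NormedAddCommGroup X] [InnerProductSpace 𝕜 X] {v : κ → X} (hv : Orthonormal 𝕜 v)
    (x : EuclideanSpace 𝕜 κ) : hv.euclideanIsometry x = ∑ a, x a • v a := by
  change (EuclideanSpace.basisFun κ 𝕜).toBasis.constr 𝕜 v x = _
  simp [Module.Basis.constr_apply_fintype]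

theorem Matrix.det_toLpLin_diagonal {R κ : Type*} [CommRing R] [Fintype κ] [DecidableEq κ]
    (p : ℝ≥0∞) (d : κ → R) :
    LinearMap.det (Matrix.toLpLin p p (Matrix.diagonal d)) = ∏ a, d a := by
  rw [Matrix.toLpLin_eq_toLin, LinearMap.det_toLin, Matrix.det_diagonal]

theorem apply_sum_smul_of_svd {Z X ι κ : Type*}
    [NormedAddCommGroup Z] [InnerProductSpace ℝ Z] [AddCommGroup X] [Module ℝ X]
    [TopologicalSpace X] [Fintype κ] {T : Z → X} {φ : ι → Z} {ψ : ι → X} {σ : ι → ℝ}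
    (hφ : Orthonormal ℝ φ) (hSVD : ∀ z, T z = ∑' k, (σ k * ⟪φ k, z⟫) • ψ k)
    {j : κ → ι} (hj : Function.Injective j) (x : κ → ℝ) :
    T (∑ a, x a • φ (j a)) = ∑ a, (σ (j a) * x a) • ψ (j a) := by
  classical
  have hcoord : ∀ a, ⟪φ (j a), ∑ b, x b • φ (j b)⟫ = x a :=
    (hφ.comp j hj).inner_right_fintype x
  have hoff : ∀ k ∉ Finset.univ.image j, ⟪φ k, ∑ b, x b • φ (j b)⟫ = 0 := by
    intro k hk
    simp only [inner_sum, real_inner_smul_right]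
    refine Finset.sum_eq_zero fun b _ => ?_
    have hkb : k ≠ j b := by rintro rfl; exact hk (Finset.mem_image_of_mem j (Finset.mem_univ b))
    rw [hφ.inner_eq_zero hkb, mul_zero]
  rw [hSVD, tsum_eq_sum (s := Finset.univ.image j) fun k hk => by simp [hoff k hk],
    Finset.sum_image fun a _ b _ h => hj h]
  simp only [hcoord]

theorem LinearIsometry.exists_centers_of_image_subset_iUnion_ball {E X ι : Type*}
    [NormedAddCommGroup E] [NormedSpace ℝ E] [FiniteDimensional ℝ E]
    [NormedAddCommGroup X] [InnerProductSpace ℝ X]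
    (f : E →ₗᵢ[ℝ] X) {A : Set E} {s : Finset ι} {c : ι → X} {t : ℝ}
    (hcover : f '' A ⊆ ⋃ i ∈ s, ball (c i) t) :
    ∃ c' : ι → E, A ⊆ ⋃ i ∈ s, ball (c' i) t := by
  set K := LinearMap.range f.toLinearMap
  -- projecting onto `K` does not increase the distance to points of `K`
  refine ⟨fun i => f.equivRange.symm (K.orthogonalProjectionOnto (c i)), fun a ha => ?_⟩
  obtain ⟨i, hi, hai⟩ := Set.mem_iUnion₂.mp (hcover ⟨a, ha, rfl⟩)
  refine Set.mem_iUnion₂.mpr ⟨i, hi, ?_⟩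
  have hfa : K.orthogonalProjectionOnto (f a) = f.equivRange a :=
    K.orthogonalProjectionOnto_mem_subspace_eq_self (f.equivRange a)
  rw [mem_ball, ← f.equivRange.symm_apply_apply a, LinearIsometryEquiv.dist_map, ← hfa,
    dist_eq_norm, ← map_sub]
  exact (K.norm_orthogonalProjectionOnto_apply_le _).trans_lt (by rwa [← dist_eq_norm])

theorem LinearMap.abs_det_le_card_mul_pow_of_image_closedBall_subset {E ι : Type*}
    [NormedAddCommGroup E] [NormedSpace ℝ E] [FiniteDimensional ℝ E]
    (L : E →ₗ[ℝ] E) (s : Finset ι) (c : ι → E) {t : ℝ} (ht : 0 ≤ t)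
    (hcover : L '' closedBall 0 1 ⊆ ⋃ i ∈ s, ball (c i) t) :
    |LinearMap.det L| ≤ s.card * t ^ Module.finrank ℝ E := by
  borelize E
  set μ : Measure E := Measure.addHaar
  have hball_pos : μ (ball 0 1) ≠ 0 := (measure_ball_pos μ 0 one_pos).ne'
  have hball_fin : μ (ball 0 1) ≠ ⊤ := measure_ball_lt_top.ne
  have hvol : ENNReal.ofReal |LinearMap.det L| * μ (ball 0 1)
      ≤ ENNReal.ofReal (s.card * t ^ Module.finrank ℝ E) * μ (ball 0 1) :=
    calc ENNReal.ofReal |LinearMap.det L| * μ (ball 0 1)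
        = μ (L '' ball 0 1) := (Measure.addHaar_image_linearMap μ L _).symm
      _ ≤ μ (⋃ i ∈ s, closedBall (c i) t) := by
          refine measure_mono ((Set.image_mono ball_subset_closedBall).trans (hcover.trans ?_))
          exact Set.iUnion₂_mono fun i _ => ball_subset_closedBall
      _ ≤ ∑ i ∈ s, μ (closedBall (c i) t) := measure_biUnion_finset_le s _
      _ = ENNReal.ofReal (s.card * t ^ Module.finrank ℝ E) * μ (ball 0 1) := by
          simp only [Measure.addHaar_closedBall μ _ ht, Finset.sum_const, nsmul_eq_mul]
          rw [ENNReal.ofReal_mul (by positivity), ENNReal.ofReal_natCast, mul_assoc]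
  exact (ENNReal.ofReal_le_ofReal_iff (by positivity)).mp
    ((ENNReal.mul_le_mul_iff_left hball_pos hball_fin).mp hvol)

open Finset in
theorem sum_log_div_le_log_of_prod_le_mul_pow {σ : ℕ → ℝ} {t N : ℝ} {m : ℕ}
    (hσ : ∀ k, 0 < σ k) (ht : 0 < t) (h : ∏ k ∈ range m, σ k ≤ N * t ^ m) :
    ∑ k ∈ range m, Real.log (σ k / t) ≤ Real.log N := by
  have hpos : 0 < ∏ k ∈ range m, σ k / t := prod_pos fun k _ => div_pos (hσ k) ht
  rw [← Real.log_prod fun k _ => (div_pos (hσ k) ht).ne']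
  refine Real.log_le_log hpos ?_
  rwa [prod_div_distrib, prod_const, card_range, div_le_iff₀ (by positivity)]

theorem entropy_lower_bound_of_svd_general {Z X : Type*}
    [NormedAddCommGroup Z] [InnerProductSpace ℝ Z]
    [NormedAddCommGroup X] [InnerProductSpace ℝ X]
    (T : Z →L[ℝ] X)
    (φ : ℕ → Z) (ψ : ℕ → X) (σ : ℕ → ℝ)
    (hφ : Orthonormal ℝ φ) (hψ : Orthonormal ℝ ψ)
    (hσpos : ∀ k, 0 < σ k)
    (hSVD : ∀ z : Z, T z = ∑' k : ℕ, (σ k * (inner ℝ (φ k) z : ℝ)) • ψ k)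
    (t : ℝ) (ht : 0 < t)
    (m : ℕ)
    -- every finite cover of `T(B₁)` by open balls of radius `t` has at least
    -- `∏_{k<m} σ_k/t` elements, i.e. `log N(T(B₁), t) ≥ ∑_{k<m} log(σ_k/t)`
    (s : Finset X) (hcover : T '' Metric.closedBall 0 1 ⊆ ⋃ x ∈ s, Metric.ball x t) :
    ∑ k ∈ Finset.range m, Real.log (σ k / t) ≤ Real.log s.card := by
  let fφ := (hφ.comp _ (Fin.val_injective (n := m))).euclideanIsometry
  let fψ := (hψ.comp _ (Fin.val_injective (n := m))).euclideanIsometry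
  let L := Matrix.toLpLin 2 2 (Matrix.diagonal fun i : Fin m => σ i)
  have hL : ∀ x, fψ (L x) = T (fφ x) := by
    intro x
    simp only [fφ, fψ, Orthonormal.euclideanIsometry_apply, Function.comp_apply]
    rw [apply_sum_smul_of_svd hφ hSVD Fin.val_injective]
    simp [L, Matrix.mulVec_diagonal]
  have hellipsoid : fψ '' (L '' closedBall 0 1) ⊆ ⋃ x ∈ s, ball (id x) t := by
    rintro _ ⟨_, ⟨x, hx, rfl⟩, rfl⟩
    exact hcover ⟨fφ x, by simpa using hx, (hL x).symm⟩
  obtain ⟨c, hc⟩ := fψ.exists_centers_of_image_subset_iUnion_ball hellipsoid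
  have hdet := L.abs_det_le_card_mul_pow_of_image_closedBall_subset s c ht.le hc
  rw [Matrix.det_toLpLin_diagonal, finrank_euclideanSpace_fin, Fin.prod_univ_eq_prod_range,
    abs_of_pos (Finset.prod_pos fun k _ => hσpos k)] at hdet
  exact sum_log_div_le_log_of_prod_le_mul_pow hσpos ht hdet

theorem entropy_lower_bound_of_svd {Z X : Type*}
    [NormedAddCommGroup Z] [InnerProductSpace ℝ Z]
    [NormedAddCommGroup X] [InnerProductSpace ℝ X]
    (T : Z →L[ℝ] X) (hT : IsCompactOperator (⇑T))
    (φ : ℕ → Z) (ψ : ℕ → X) (σ : ℕ → ℝ)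
    (hφ : Orthonormal ℝ φ) (hψ : Orthonormal ℝ ψ)
    (hσpos : ∀ k, 0 < σ k) (hσanti : Antitone σ)
    (hSVD : ∀ z : Z, T z = ∑' k : ℕ, (σ k * (inner ℝ (φ k) z : ℝ)) • ψ k)
    (t : ℝ) (ht : 0 < t)
    (m : ℕ) (hm : ∀ k : ℕ, 2 * t ≤ σ k ↔ k < m)
    -- every finite cover of `T(B₁)` by open balls of radius `t` has at least
    -- `∏_{k<m} σ_k/t` elements, i.e. `log N(T(B₁), t) ≥ ∑_{k<m} log(σ_k/t)`
    (s : Finset X) (hcover : T '' Metric.closedBall 0 1 ⊆ ⋃ x ∈ s, Metric.ball x t) :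
    ∑ k ∈ Finset.range m, Real.log (σ k / t) ≤ Real.log s.card :=
  entropy_lower_bound_of_svd_general T φ ψ σ hφ hψ hσpos hSVD t ht m s hcover
end
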